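/- Bisimilarity of airplanes (Proposition 5): Airplane ≈ Airplanē, where Airplane = ((Eng_L ⊎ Eng_R) ‖ Check)∖{warning} and Airplanē = ((Enḡ_L ⊎ Enḡ_R) ‖ Check)∖{warning}, with Eng_L, Eng_R renamed disjoint copies of Eng (with identifiers L and R and renamed state variable, actuator and sensor), Enḡ_L, Enḡ_R the corresponding renamed copies of the variant engine Enḡ whose evolution map uses heat(ξu,cool) = −0.8 when ξu(cool) = on, and Check the non-interfering monitoring process defined below. -/

import Mathlib

namespace CCPS

/-! ## Names and values -/

abbrev Chan := ℕ
abbrev SensName := ℕ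
abbrev ActName := ℕ
abbrev Val := ℝ

/-! ## Processes (value binders as functions, process variables in de Bruijn style) -/

inductive Proc : Type where
  | nil   : Proc
  | pvar  : ℕ → Proc
  | tick  : Proc → Proc
  | par   : Proc → Proc → Proc
  | out   : Chan → Val → Proc → Proc → Proc      -- ⌊c̄⟨v⟩.P⌋Q
  | inp   : Chan → (Val → Proc) → Proc → Proc    -- ⌊c(x).P⌋Q
  | read  : SensName → (Val → Proc) → Proc → Proc -- ⌊s?(x).P⌋Q
  | write : ActName → Val → Proc → Proc → Proc   -- ⌊a!⟨v⟩.P⌋Q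
  | res   : Proc → Chan → Proc                   -- P∖c
  | fix   : Proc → Proc                          -- fix X.P  (binds de Bruijn index 0)

/-- Lift (shift) all process variables ≥ cutoff `c` by one. -/
def Proc.lift (c : ℕ) : Proc → Proc
  | .nil => .nil
  | .pvar m => if m < c then .pvar m else .pvar (m+1)
  | .tick P => .tick (Proc.lift c P)
  | .par P Q => .par (Proc.lift c P) (Proc.lift c Q)
  | .out ch v P Q => .out ch v (Proc.lift c P) (Proc.lift c Q)
  | .inp ch f Q => .inp ch (fun v => Proc.lift c (f v)) (Proc.lift c Q)
  | .read s f Q => .read s (fun v => Proc.lift c (f v)) (Proc.lift c Q)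
  | .write a v P Q => .write a v (Proc.lift c P) (Proc.lift c Q)
  | .res P ch => .res (Proc.lift c P) ch
  | .fix P => .fix (Proc.lift (c+1) P)

/-- Substitute process variable `n` by `R`. -/
def Proc.subst : Proc → ℕ → Proc → Proc
  | .nil, _, _ => .nil
  | .pvar m, n, R => if m = n then R else if n < m then .pvar (m-1) else .pvar m
  | .tick P, n, R => .tick (Proc.subst P n R)
  | .par P Q, n, R => .par (Proc.subst P n R) (Proc.subst Q n R)
  | .out ch v P Q, n, R => .out ch v (Proc.subst P n R) (Proc.subst Q n R)
  | .inp ch f Q, n, R => .inp ch (fun v => Proc.subst (f v) n R) (Proc.subst Q n R)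
  | .read s f Q, n, R => .read s (fun v => Proc.subst (f v) n R) (Proc.subst Q n R)
  | .write a v P Q, n, R => .write a v (Proc.subst P n R) (Proc.subst Q n R)
  | .res P ch, n, R => .res (Proc.subst P n R) ch
  | .fix P, n, R => .fix (Proc.subst P (n+1) (Proc.lift 0 R))

/-- Unfolding of recursion: P[fix X.P / X]. -/
def Proc.unfold (P : Proc) : Proc := Proc.subst P 0 (.fix P)

/-! ## Labels -/

inductive Label : Type where
  | tick  : Label
  | tau   : Label
  | out   : Chan → Val → Label     -- c̄v
  | inp   : Chan → Val → Label     -- cv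
  | write : ActName → Val → Label  -- a!v
  | read  : SensName → Val → Label -- s?v

/-! ## Labelled transition system for processes.

Untimed transitions `UStep` (labels different from tick) are defined first;
then timed transitions `TStep` (which use the absence of τ-transitions
negatively) are defined on top of them, and `Step` combines the two. -/

inductive UStep : Proc → Label → Proc → Prop where
  | outp  : UStep (.out c v P Q) (.out c v) P
  | inpp  : UStep (.inp c f Q) (.inp c v) (f v)
  | write : UStep (.write a v P Q) (.write a v) P
  | read  : UStep (.read s f Q) (.read s v) (f v)
  | comL  : UStep P (.out c v) P' → UStep Q (.inp c v) Q' →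
            UStep (.par P Q) .tau (.par P' Q')
  | comR  : UStep P (.inp c v) P' → UStep Q (.out c v) Q' →
            UStep (.par P Q) .tau (.par P' Q')
  | parL  : UStep P l P' → l ≠ .tick → UStep (.par P Q) l (.par P' Q)
  | parR  : UStep Q l Q' → l ≠ .tick → UStep (.par P Q) l (.par P Q')
  | res   : UStep P l P' → (∀ v, l ≠ .inp c v ∧ l ≠ .out c v) →
            UStep (.res P c) l (.res P' c)
  | unfold : UStep (Proc.unfold P) l Q → UStep (.fix P) l Q

inductive TStep : Proc → Proc → Prop where
  | nil          : TStep .nil .nil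
  | delay        : TStep (.tick P) P
  | timeoutOut   : TStep (.out c v P Q) Q
  | timeoutInp   : TStep (.inp c f Q) Q
  | timeoutRead  : TStep (.read s f Q) Q
  | timeoutWrite : TStep (.write a v P Q) Q
  | timePar      : TStep P P' → TStep Q Q' → (∀ R, ¬ UStep (.par P Q) .tau R) →
                   TStep (.par P Q) (.par P' Q')
  | res          : TStep P P' → TStep (.res P c) (.res P' c)
  | unfold       : TStep (Proc.unfold P) Q → TStep (.fix P) Q

/-- The process LTS. -/
def Step (P : Proc) (l : Label) (Q : Proc) : Prop :=
  match l with
  | .tick => TStep P Q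
  | _ => UStep P l Q

/-! ## Structural congruence: the least congruence containing commutativity and
associativity of parallel composition, with nil as neutral element. -/

inductive SC : Proc → Proc → Prop where
  | refl      : SC P P
  | symm      : SC P Q → SC Q P
  | trans     : SC P Q → SC Q R → SC P R
  | parComm   : SC (.par P Q) (.par Q P)
  | parAssoc  : SC (.par (.par P Q) R) (.par P (.par Q R))
  | parNil    : SC (.par P .nil) P
  | tickCong  : SC P P' → SC (.tick P) (.tick P')
  | parCong   : SC P P' → SC Q Q' → SC (.par P Q) (.par P' Q')
  | outCong   : SC P P' → SC Q Q' → SC (.out c v P Q) (.out c v P' Q')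
  | inpCong   : (∀ v, SC (f v) (g v)) → SC Q Q' → SC (.inp c f Q) (.inp c g Q')
  | readCong  : (∀ v, SC (f v) (g v)) → SC Q Q' → SC (.read s f Q) (.read s g Q')
  | writeCong : SC P P' → SC Q Q' → SC (.write a v P Q) (.write a v P' Q')
  | resCong   : SC P P' → SC (.res P c) (.res P' c)
  | fixCong   : SC P P' → SC (.fix P) (.fix P')

/-! ## Static predicates on processes -/

/-- All free process variables are < d. -/
inductive ClosedAbove : ℕ → Proc → Prop where
  | nil   : ClosedAbove d .nil
  | pvar  : m < d → ClosedAbove d (.pvar m)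
  | tick  : ClosedAbove d P → ClosedAbove d (.tick P)
  | par   : ClosedAbove d P → ClosedAbove d Q → ClosedAbove d (.par P Q)
  | out   : ClosedAbove d P → ClosedAbove d Q → ClosedAbove d (.out c v P Q)
  | inp   : (∀ v, ClosedAbove d (f v)) → ClosedAbove d Q → ClosedAbove d (.inp c f Q)
  | read  : (∀ v, ClosedAbove d (f v)) → ClosedAbove d Q → ClosedAbove d (.read s f Q)
  | write : ClosedAbove d P → ClosedAbove d Q → ClosedAbove d (.write a v P Q)
  | res   : ClosedAbove d P → ClosedAbove d (.res P c)
  | fix   : ClosedAbove (d+1) P → ClosedAbove d (.fix P)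

/-- A closed process: no free process variables. -/
def Proc.Closed (P : Proc) : Prop := ClosedAbove 0 P

/-- `TG n P`: process variable `n` occurs only time-guarded in `P`
(occurrences under `tick.-` or in the timeout continuation `Q` of `⌊π.P⌋Q`
are time-guarded). -/
inductive TG : ℕ → Proc → Prop where
  | nil   : TG n .nil
  | pvar  : m ≠ n → TG n (.pvar m)
  | tick  : TG n (.tick P)
  | par   : TG n P → TG n Q → TG n (.par P Q)
  | out   : TG n P → TG n (.out c v P Q)
  | inp   : (∀ v, TG n (f v)) → TG n (.inp c f Q)
  | read  : (∀ v, TG n (f v)) → TG n (.read s f Q)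
  | write : TG n P → TG n (.write a v P Q)
  | res   : TG n P → TG n (.res P c)
  | fix   : TG (n+1) P → TG n (.fix P)

/-- Well-formed processes: in every recursion `fix X.P` all occurrences of `X`
in `P` are time-guarded. -/
inductive WF : Proc → Prop where
  | nil   : WF .nil
  | pvar  : WF (.pvar m)
  | tick  : WF P → WF (.tick P)
  | par   : WF P → WF Q → WF (.par P Q)
  | out   : WF P → WF Q → WF (.out c v P Q)
  | inp   : (∀ v, WF (f v)) → WF Q → WF (.inp c f Q)
  | read  : (∀ v, WF (f v)) → WF Q → WF (.read s f Q)
  | write : WF P → WF Q → WF (.write a v P Q)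
  | res   : WF P → WF (.res P c)
  | fix   : TG 0 P → WF P → WF (.fix P)

/-- Non-interfering process: it never reads sensors nor writes actuators. -/
inductive NonInterfering : Proc → Prop where
  | nil  : NonInterfering .nil
  | pvar : NonInterfering (.pvar m)
  | tick : NonInterfering P → NonInterfering (.tick P)
  | par  : NonInterfering P → NonInterfering Q → NonInterfering (.par P Q)
  | out  : NonInterfering P → NonInterfering Q → NonInterfering (.out c v P Q)
  | inp  : (∀ v, NonInterfering (f v)) → NonInterfering Q → NonInterfering (.inp c f Q)
  | res  : NonInterfering P → NonInterfering (.res P c)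
  | fix  : NonInterfering P → NonInterfering (.fix P)

/-- `DevOK A S P`: every actuator mentioned in `P` is in `A` and every sensor
mentioned in `P` is in `S`. -/
inductive DevOK (A S : Finset ℕ) : Proc → Prop where
  | nil   : DevOK A S .nil
  | pvar  : DevOK A S (.pvar m)
  | tick  : DevOK A S P → DevOK A S (.tick P)
  | par   : DevOK A S P → DevOK A S Q → DevOK A S (.par P Q)
  | out   : DevOK A S P → DevOK A S Q → DevOK A S (.out c v P Q)
  | inp   : (∀ v, DevOK A S (f v)) → DevOK A S Q → DevOK A S (.inp c f Q)
  | read  : s ∈ S → (∀ v, DevOK A S (f v)) → DevOK A S Q → DevOK A S (.read s f Q)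
  | write : a ∈ A → DevOK A S P → DevOK A S Q → DevOK A S (.write a v P Q)
  | res   : DevOK A S P → DevOK A S (.res P c)
  | fix   : DevOK A S P → DevOK A S (.fix P)

/-! ## Physical environments -/

structure Env where
  X : Finset ℕ                       -- state variables
  A : Finset ℕ                       -- actuators
  S : Finset ℕ                       -- sensors
  xi_x : {n // n ∈ X} → ℝ            -- state function
  xi_u : {n // n ∈ A} → ℝ            -- actuator function
  xi_w : {n // n ∈ X} → ℝ            -- uncertainty function
  evol : ({n // n ∈ X} → ℝ) → ({n // n ∈ A} → ℝ) → ({n // n ∈ X} → ℝ) →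
         Set ({n // n ∈ X} → ℝ)      -- evolution map
  xi_e : {n // n ∈ S} → ℝ            -- sensor-error function
  meas : ({n // n ∈ X} → ℝ) → ({n // n ∈ S} → ℝ) →
         Set ({n // n ∈ S} → ℝ)      -- measurement map
  inv  : ({n // n ∈ X} → ℝ) → Prop   -- invariant function

/-- Possible measurements of sensor `s` in `E`. -/
def readSensor (E : Env) (s : ℕ) : Set ℝ :=
  { r | ∃ h : s ∈ E.S, ∃ ξ ∈ E.meas E.xi_x E.xi_e, r = ξ ⟨s, h⟩ }

/-- Update the value of actuator `a` to `v`. -/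
def updateAct (E : Env) (a : ℕ) (v : ℝ) : Env :=
  { E with xi_u := fun b => if (b : ℕ) = a then v else E.xi_u b }

/-- The set of next admissible environments. -/
def nextEnv (E : Env) : Set Env :=
  { E' | ∃ ξ ∈ E.evol E.xi_x E.xi_u E.xi_w, E' = { E with xi_x := ξ } }

/-- The invariant of `E`, evaluated at the current state. -/
def invHolds (E : Env) : Prop := E.inv E.xi_x

/-! ## Disjoint union of environments -/

/-- Glue two functions defined on finite sets into one on the union
(well defined on disjoint sets). -/
def glue {X1 X2 : Finset ℕ} (f : {n // n ∈ X1} → ℝ) (g : {n // n ∈ X2} → ℝ) :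
    {n // n ∈ X1 ∪ X2} → ℝ :=
  fun x => if h : (x : ℕ) ∈ X1 then f ⟨x, h⟩
           else g ⟨x, (Finset.mem_union.mp x.2).resolve_left h⟩

/-- Restriction of a function on a union to the left component. -/
def restrL {X1 X2 : Finset ℕ} (f : {n // n ∈ X1 ∪ X2} → ℝ) : {n // n ∈ X1} → ℝ :=
  fun x => f ⟨x, Finset.mem_union_left _ x.2⟩

/-- Restriction of a function on a union to the right component. -/
def restrR {X1 X2 : Finset ℕ} (f : {n // n ∈ X1 ∪ X2} → ℝ) : {n // n ∈ X2} → ℝ :=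
  fun x => f ⟨x, Finset.mem_union_right _ x.2⟩

/-- Disjointness of the name sets of two environments. -/
def EnvDisj (E1 E2 : Env) : Prop :=
  Disjoint E1.X E2.X ∧ Disjoint E1.A E2.A ∧ Disjoint E1.S E2.S

/-- Disjoint union `E1 ⊎ E2` of two environments. -/
def Env.disjUnion (E1 E2 : Env) : Env where
  X := E1.X ∪ E2.X
  A := E1.A ∪ E2.A
  S := E1.S ∪ E2.S
  xi_x := glue E1.xi_x E2.xi_x
  xi_u := glue E1.xi_u E2.xi_u
  xi_w := glue E1.xi_w E2.xi_w
  evol := fun ξ ψ φ =>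
    { ξ' | ∃ ξ1 ∈ E1.evol (restrL ξ) (restrL ψ) (restrL φ),
           ∃ ξ2 ∈ E2.evol (restrR ξ) (restrR ψ) (restrR φ), ξ' = glue ξ1 ξ2 }
  xi_e := glue E1.xi_e E2.xi_e
  meas := fun ξ η =>
    { m | ∃ m1 ∈ E1.meas (restrL ξ) (restrL η),
          ∃ m2 ∈ E2.meas (restrR ξ) (restrR η), m = glue m1 m2 }
  inv := fun ξ => E1.inv (restrL ξ) ∧ E2.inv (restrR ξ)

/-! ## Cyber-physical systems -/

structure CPS where
  env  : Env
  proc : Proc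

/-- Well-formed CPS: closed, time-guarded process mentioning only devices of
its environment. -/
def CPS.WellFormed (M : CPS) : Prop :=
  M.proc.Closed ∧ WF M.proc ∧ DevOK M.env.A M.env.S M.proc

/-- Disjoint union of (non-interfering) CPSs. -/
def CPS.disjUnion (M O : CPS) : CPS :=
  ⟨M.env.disjUnion O.env, .par M.proc O.proc⟩

/-- Untimed CPS transitions (rules Out, Inp, SensRead, ActWrite, Tau). -/
inductive CStepU : CPS → Label → CPS → Prop where
  | out : UStep P (.out c v) P' → invHolds E →
          CStepU ⟨E, P⟩ (.out c v) ⟨E, P'⟩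
  | inp : UStep P (.inp c v) P' → invHolds E →
          CStepU ⟨E, P⟩ (.inp c v) ⟨E, P'⟩
  | sensRead : UStep P (.read s v) P' → invHolds E → v ∈ readSensor E s →
          CStepU ⟨E, P⟩ .tau ⟨E, P'⟩
  | actWrite : UStep P (.write a v) P' → invHolds E →
          CStepU ⟨E, P⟩ .tau ⟨updateAct E a v, P'⟩
  | tau : UStep P .tau P' → invHolds E →
          CStepU ⟨E, P⟩ .tau ⟨E, P'⟩

/-- The CPS LTS (rule Time for tick, `CStepU` otherwise). -/
def CStep (M : CPS) (α : Label) (N : CPS) : Prop :=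
  match α with
  | .tick => TStep M.proc N.proc ∧ (∀ N', ¬ CStepU M .tau N') ∧
             invHolds M.env ∧ N.env ∈ nextEnv M.env
  | _ => CStepU M α N

/-! ## Weak transitions and bisimulation -/

def TauStep (M N : CPS) : Prop := CStep M .tau N

/-- `M ⇒ N`. -/
def WeakTau : CPS → CPS → Prop := Relation.ReflTransGen TauStep

/-- `M ⇒α⇒ N`. -/
def WeakStep (M : CPS) (α : Label) (N : CPS) : Prop :=
  ∃ M₁ M₂, WeakTau M M₁ ∧ CStep M₁ α M₂ ∧ WeakTau M₂ N

/-- `M ⇒α̂⇒ N`. -/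
def WeakHat (M : CPS) (α : Label) (N : CPS) : Prop :=
  match α with
  | .tau => WeakTau M N
  | _ => WeakStep M α N

def IsBisimulation (R : CPS → CPS → Prop) : Prop :=
  (∀ {M N}, R M N → R N M) ∧
  (∀ {M N α M'}, R M N → CStep M α M' → ∃ N', WeakHat N α N' ∧ R M' N')

/-- Weak bisimilarity `M ≈ N`. -/
def Bisim (M N : CPS) : Prop := ∃ R, IsBisimulation R ∧ R M N

/-! ## Traces -/

/-- Reachability in the CPS LTS. -/
def Reach : CPS → CPS → Prop :=
  Relation.ReflTransGen (fun M N => ∃ α, CStep M α N)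

def UntimedStep (M N : CPS) : Prop := ∃ α, α ≠ Label.tick ∧ CStep M α N

def UntimedReach : CPS → CPS → Prop := Relation.ReflTransGen UntimedStep

/-- One time slot: some untimed activity followed by a tick. -/
def SlotStep (M N : CPS) : Prop := ∃ M', UntimedReach M M' ∧ CStep M' .tick N

/-! ## Derived process notation -/

/-- Persistent prefix `π.P := fix X.⌊π.P⌋X` (output). -/
def prefOut (c : Chan) (v : Val) (P : Proc) : Proc :=
  .fix (.out c v (Proc.lift 0 P) (.pvar 0))

/-- Persistent prefix (actuator write). -/
def prefWrite (a : ActName) (v : Val) (P : Proc) : Proc :=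
  .fix (.write a v (Proc.lift 0 P) (.pvar 0))

/-- Persistent prefix (sensor read). -/
def prefRead (s : SensName) (f : Val → Proc) : Proc :=
  .fix (.read s (fun v => Proc.lift 0 (f v)) (.pvar 0))

/-- `tick^k.P`. -/
def Proc.ticks : ℕ → Proc → Proc
  | 0, P => P
  | n+1, P => .tick (Proc.ticks n P)

/-! ## The engine case study -/

noncomputable section
open Classical

def engDelta : ℝ := 0.4   -- uncertainty δ
def engEps : ℝ := 0.1     -- sensor error ε

/-- Value written on the actuator `cool` to turn the cooling on
(the actuator is on iff its value is negative). -/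
def valOn : Val := -1
/-- Value written on the actuator `cool` to turn the cooling off. -/
def valOff : Val := 1

def IsOn (u : ℝ) : Prop := u < 0
def IsOff (u : ℝ) : Prop := 0 ≤ u

/-- `heat(ξu, cool)`: `-coolRate` if the cooling is active, `+1` otherwise. -/
def engHeat (coolRate : ℝ) (u : ℝ) : ℝ := if u < 0 then -coolRate else 1

def warningCh : Chan := 0
def alarmCh : Chan := 1
def failureCh : Chan := 2

/-- The physical environment of the engine, with cooling power `coolRate`,
state variable `x` (temperature), actuator `a` (cool) and sensor `s`. -/
def EngEnvN (coolRate : ℝ) (x a s : ℕ) : Env where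
  X := {x}
  A := {a}
  S := {s}
  xi_x := fun _ => 0
  xi_u := fun _ => valOff
  xi_w := fun _ => engDelta
  evol := fun ξ ψ _ =>
    { ξ' | ∃ γ ∈ Set.Icc (-engDelta) engDelta,
           ∀ y u, ξ' y = ξ y + engHeat coolRate (ψ u) + γ }
  xi_e := fun _ => engEps
  meas := fun ξ _ =>
    { m | ∀ t y, m t ∈ Set.Icc (ξ y - engEps) (ξ y + engEps) }
  inv := fun ξ => ∀ y, 0 ≤ ξ y ∧ ξ y ≤ 30

/-- The controller of the engine with identifier `ID`, actuator `a` and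
sensor `s`:
`Ctrl = fix X. s?(x). if x > 10 then Cooling else tick.X` with
`Cooling = a!⟨on⟩.fix Y.tick⁵.s?(x). if x > 10 then w̄arning⟨ID⟩.Y else a!⟨off⟩.tick.X`. -/
def CtrlN (ID : Val) (a s : ℕ) : Proc :=
  .fix (prefRead s (fun x =>
    if 10 < x then
      prefWrite a valOn (.fix (Proc.ticks 5 (prefRead s (fun y =>
        if 10 < y then prefOut warningCh ID (.pvar 0)
        else prefWrite a valOff (.tick (.pvar 1))))))
    else .tick (.pvar 0)))

/-- The engine with cooling power `coolRate`. -/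
def EngGen (coolRate : ℝ) : CPS := ⟨EngEnvN coolRate 0 0 0, CtrlN 0 0 0⟩

/-- The engine `Eng`. -/
def Eng : CPS := EngGen 1
/-- The variant engine `Enḡ` (heat = −0.8 when cooling). -/
def EngBar : CPS := EngGen 0.8
/-- The variant engine `Enĝ` (heat = −0.7 when cooling). -/
def EngHat : CPS := EngGen 0.7

/-- Current temperature of an engine-like CPS (state variable named 0). -/
def CPS.temp (M : CPS) : ℝ :=
  if h : (0 : ℕ) ∈ M.env.X then M.env.xi_x ⟨0, h⟩ else 0

/-- Current value of the `cool` actuator of an engine-like CPS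
(actuator named 0). -/
def CPS.cool (M : CPS) : ℝ :=
  if h : (0 : ℕ) ∈ M.env.A then M.env.xi_u ⟨0, h⟩ else 0

/-! ## The airplane case study -/

def idL : Val := 0
def idR : Val := 1

/-- `CheckAux id m` is `Check^id_(5-m)`; the free process variable 0 is the
recursion variable `X` of `Check`. -/
def CheckAux (id : Val) : ℕ → Proc
  | 0 => .inp warningCh (fun z =>
           if z ≠ id then prefOut alarmCh 0 (.tick (.pvar 0))
           else prefOut failureCh id (.tick (.pvar 0)))
         (prefOut failureCh id (.pvar 0))
  | m+1 => .inp warningCh (fun y =>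
           if y ≠ id then prefOut alarmCh 0 (.tick (.pvar 0))
           else .tick (CheckAux id m))
         (CheckAux id m)

/-- The monitoring process `Check`. -/
def Check : Proc :=
  .fix (.inp warningCh
    (fun x => if x = idL then CheckAux idL 4 else CheckAux idR 4)
    (.pvar 0))

/-- The left engine (identifier L, devices named 0). -/
def EngL (coolRate : ℝ) : CPS := ⟨EngEnvN coolRate 0 0 0, CtrlN idL 0 0⟩
/-- The right engine (identifier R, devices named 1). -/
def EngR (coolRate : ℝ) : CPS := ⟨EngEnvN coolRate 1 1 1, CtrlN idR 1 1⟩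

/-- `Airplane(r) = ((Eng_L ⊎ Eng_R) ‖ Check)∖warning` with cooling power r. -/
def AirplaneGen (coolRate : ℝ) : CPS :=
  ⟨(EngEnvN coolRate 0 0 0).disjUnion (EngEnvN coolRate 1 1 1),
   .res (.par (.par (CtrlN idL 0 0) (CtrlN idR 1 1)) Check) warningCh⟩

def Airplane : CPS := AirplaneGen 1
def AirplaneBar : CPS := AirplaneGen 0.8

end

/-!
Every state reachable in either airplane satisfies `AirInv`: for some cooling power
`r ∈ [0.8, 1]`, the temperature of each engine lies in an interval fixed by the control point of
its controller. In particular, five cooling ticks always bring the temperature below `10 - ε`,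
so no warning is ever sent, `Check` never moves, and the only actions are `τ` and `tick`. From
every such state the controllers reach, by at most four `τ`-steps, a point where a tick is
possible. Hence any two states satisfying the invariant are weakly bisimilar.
-/

open Set Function

theorem bisim_of_invariant (G : CPS → Prop)
    (step : ∀ {M α N}, G M → CStep M α N → (α = .tau ∨ α = .tick) ∧ G N)
    (tick : ∀ {M}, G M → ∃ N, WeakStep M .tick N ∧ G N) {M N : CPS} (hM : G M) (hN : G N) :
    Bisim M N := by
  refine ⟨fun M N => G M ∧ G N, ⟨fun h => h.symm, fun {M N α M'} hMN hs => ?_⟩, hM, hN⟩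
  obtain ⟨rfl | rfl, hM'⟩ := step hMN.1 hs
  · exact ⟨N, .refl, hM', hMN.2⟩
  · obtain ⟨N', hN', hG⟩ := tick hMN.2
    exact ⟨N', hN', hM', hG⟩

theorem Proc.subst_lift (P : Proc) (n : ℕ) (R : Proc) : (P.lift n).subst n R = P := by
  induction P generalizing n R with
  | nil => rfl
  | pvar m =>
      by_cases h : m < n
      · simp [Proc.lift, Proc.subst, h, show m ≠ n by omega, show ¬ n < m by omega]
      · simp [Proc.lift, Proc.subst, h, show m + 1 ≠ n by omega, show n < m + 1 by omega]
  | tick P ih => simp [Proc.lift, Proc.subst, ih]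
  | par P Q ihP ihQ => simp [Proc.lift, Proc.subst, ihP, ihQ]
  | out c v P Q ihP ihQ => simp [Proc.lift, Proc.subst, ihP, ihQ]
  | inp c f Q ihf ihQ => simp [Proc.lift, Proc.subst, ihf, ihQ]
  | read s f Q ihf ihQ => simp [Proc.lift, Proc.subst, ihf, ihQ]
  | write a v P Q ihP ihQ => simp [Proc.lift, Proc.subst, ihP, ihQ]
  | res P c ih => simp [Proc.lift, Proc.subst, ih]
  | fix P ih => simp [Proc.lift, Proc.subst, ih]

theorem Proc.subst_ite (p : Prop) [Decidable p] (P Q : Proc) (n : ℕ) (R : Proc) :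
    (if p then P else Q).subst n R = if p then P.subst n R else Q.subst n R := by
  split <;> rfl

def UnfoldsTo (P P' : Proc) : Prop := ∃ B, P = .fix B ∧ B.unfold = P'

theorem UnfoldsTo.ustep_iff {P P' : Proc} (h : UnfoldsTo P P') {l : Label} {Q : Proc} :
    UStep P l Q ↔ UStep P' l Q := by
  obtain ⟨B, rfl, rfl⟩ := h
  exact ⟨fun h => by cases h; assumption, .unfold⟩

theorem UnfoldsTo.tstep_iff {P P' : Proc} (h : UnfoldsTo P P') {Q : Proc} :
    TStep P Q ↔ TStep P' Q := by
  obtain ⟨B, rfl, rfl⟩ := h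
  exact ⟨fun h => by cases h; assumption, .unfold⟩

theorem unfoldsTo_prefRead (s : SensName) (f : Val → Proc) :
    UnfoldsTo (prefRead s f) (.read s f (prefRead s f)) :=
  ⟨_, rfl, by simp [Proc.unfold, Proc.subst, Proc.subst_lift, prefRead]⟩

theorem unfoldsTo_prefWrite (a : ActName) (v : Val) (P : Proc) :
    UnfoldsTo (prefWrite a v P) (.write a v P (prefWrite a v P)) :=
  ⟨_, rfl, by simp [Proc.unfold, Proc.subst, Proc.subst_lift, prefWrite]⟩

theorem not_ustep_tick {P : Proc} {l : Label} {Q : Proc} : ¬ UStep (.tick P) l Q := nofun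

theorem tstep_tick_iff {P Q : Proc} : TStep (.tick P) Q ↔ Q = P :=
  ⟨fun h => by cases h; rfl, fun h => h ▸ .delay⟩

theorem not_ustep_par {P Q : Proc} (hP : ∀ l P', ¬ UStep P l P') (hQ : ∀ l Q', ¬ UStep Q l Q')
    {l : Label} {R : Proc} : ¬ UStep (.par P Q) l R := by
  intro h
  cases h with
  | comL h _ | parL h _ => exact hP _ _ h
  | comR _ h | parR h _ => exact hQ _ _ h

theorem ustep_prefRead_iff {s : SensName} {f : Val → Proc} {l : Label} {Q : Proc} :
    UStep (prefRead s f) l Q ↔ ∃ v, l = .read s v ∧ Q = f v := by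
  rw [(unfoldsTo_prefRead s f).ustep_iff]
  exact ⟨fun h => by cases h; exact ⟨_, rfl, rfl⟩, fun ⟨v, hl, hQ⟩ => hl ▸ hQ ▸ .read⟩

theorem ustep_prefWrite_iff {a : ActName} {v : Val} {P : Proc} {l : Label} {Q : Proc} :
    UStep (prefWrite a v P) l Q ↔ l = .write a v ∧ Q = P := by
  rw [(unfoldsTo_prefWrite a v P).ustep_iff]
  exact ⟨fun h => by cases h; exact ⟨rfl, rfl⟩, fun ⟨hl, hQ⟩ => hl ▸ hQ ▸ .write⟩

theorem exists_unfoldsTo_check : ∃ f, UnfoldsTo Check (.inp warningCh f Check) :=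
  ⟨_, _, rfl, rfl⟩

theorem ustep_check {l : Label} {Q : Proc} (h : UStep Check l Q) :
    ∃ v, l = .inp warningCh v := by
  obtain ⟨f, hf⟩ := exists_unfoldsTo_check
  rw [hf.ustep_iff] at h
  cases h
  exact ⟨_, rfl⟩

theorem tstep_check_iff {Q : Proc} : TStep Check Q ↔ Q = Check := by
  obtain ⟨f, hf⟩ := exists_unfoldsTo_check
  rw [hf.tstep_iff]
  exact ⟨fun h => by cases h; rfl, fun h => h ▸ .timeoutInp⟩

noncomputable section

/-- The loop `fix Y. tick⁵. s?(x). …` of `Cooling`, with the recursion variable `X` instantiated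
by the controller. -/
def coolLoop (ID : Val) (a s : ℕ) : Proc :=
  .fix (Proc.ticks 5 (prefRead s (fun y =>
    if 10 < y then prefOut warningCh ID (.pvar 0)
    else prefWrite a valOff (.tick (CtrlN ID a s)))))

def coolCheck (ID : Val) (a s : ℕ) : Proc :=
  prefRead s (fun y =>
    if 10 < y then prefOut warningCh ID (coolLoop ID a s)
    else prefWrite a valOff (.tick (CtrlN ID a s)))

theorem unfoldsTo_ctrlN (ID : Val) (a s : ℕ) :
    UnfoldsTo (CtrlN ID a s) (prefRead s fun x =>
      if 10 < x then prefWrite a valOn (coolLoop ID a s) else .tick (CtrlN ID a s)) :=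
  ⟨_, rfl, by simp [Proc.unfold, CtrlN, coolLoop, prefRead, prefWrite, prefOut, Proc.ticks,
    Proc.lift, Proc.subst, apply_ite, Proc.subst_ite]⟩

theorem unfoldsTo_coolLoop (ID : Val) (a s : ℕ) :
    UnfoldsTo (coolLoop ID a s) (Proc.ticks 5 (coolCheck ID a s)) :=
  ⟨_, rfl, by simp [Proc.unfold, CtrlN, coolLoop, coolCheck, prefRead, prefWrite, prefOut,
    Proc.ticks, Proc.lift, Proc.subst, apply_ite, Proc.subst_ite]⟩

/-- Control points of `Ctrl`: `sense` is `Ctrl` itself, `idle` is `tick.Ctrl`, `switchOn` and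
`switchOff` are the pending writes `cool!⟨on⟩` and `cool!⟨off⟩`, `cooling` is the loop `Y`, and
`countdown k` is `Y` after `5 - k` ticks. -/
inductive CtrlState : Type
  | sense | idle | switchOn | cooling | countdown (k : ℕ) | switchOff

namespace CtrlState

def proc (ID : Val) (a : ℕ) : CtrlState → Proc
  | sense => CtrlN ID a a
  | idle => .tick (CtrlN ID a a)
  | switchOn => prefWrite a valOn (coolLoop ID a a)
  | cooling => coolLoop ID a a
  | countdown k => Proc.ticks k (coolCheck ID a a)
  | switchOff => prefWrite a valOff (.tick (CtrlN ID a a))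

def IsQuiet : CtrlState → Prop
  | idle | cooling | countdown (_ + 1) => True
  | _ => False

def afterTick : CtrlState → CtrlState
  | idle => sense
  | cooling => countdown 4
  | countdown (k + 1) => countdown k
  | c => c

/-- The number of instantaneous actions performed before the controller waits for a tick. -/
def pending : CtrlState → ℕ
  | sense | countdown 0 => 2
  | switchOn | switchOff => 1
  | _ => 0

variable {ID : Val} {a : ℕ} {c : CtrlState} {l : Label} {Q : Proc}

theorem ustep_proc_iff : UStep (c.proc ID a) l Q ↔
    (c = sense ∧ ∃ v, l = .read a v ∧
      Q = if 10 < v then switchOn.proc ID a else idle.proc ID a) ∨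
    (c = countdown 0 ∧ ∃ v, l = .read a v ∧
      Q = if 10 < v then prefOut warningCh ID (cooling.proc ID a) else switchOff.proc ID a) ∨
    (c = switchOn ∧ l = .write a valOn ∧ Q = cooling.proc ID a) ∨
    (c = switchOff ∧ l = .write a valOff ∧ Q = idle.proc ID a) := by
  cases c with
  | sense => simp [proc, (unfoldsTo_ctrlN ID a a).ustep_iff, ustep_prefRead_iff, apply_ite]
  | idle => simp [proc, not_ustep_tick]
  | switchOn => simp [proc, ustep_prefWrite_iff]
  | cooling => simp [proc, (unfoldsTo_coolLoop ID a a).ustep_iff, Proc.ticks, not_ustep_tick]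
  | countdown k =>
      cases k with
      | zero => simp [proc, Proc.ticks, coolCheck, ustep_prefRead_iff]
      | succ k => simp [proc, Proc.ticks, not_ustep_tick]
  | switchOff => simp [proc, ustep_prefWrite_iff]

theorem IsQuiet.not_ustep (hc : c.IsQuiet) : ¬ UStep (c.proc ID a) l Q := by
  rw [ustep_proc_iff]
  rintro (⟨rfl, -⟩ | ⟨rfl, -⟩ | ⟨rfl, -⟩ | ⟨rfl, -⟩) <;> exact hc

theorem IsQuiet.tstep_iff (hc : c.IsQuiet) :
    TStep (c.proc ID a) Q ↔ Q = c.afterTick.proc ID a := by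
  match c, hc with
  | idle, _ => exact tstep_tick_iff
  | cooling, _ => exact (unfoldsTo_coolLoop ID a a).tstep_iff.trans tstep_tick_iff
  | countdown (k + 1), _ => exact tstep_tick_iff

theorem label_of_ustep_proc (h : UStep (c.proc ID a) l Q) :
    (∃ v, l = .read a v) ∨ (∃ v, l = .write a v) := by
  rcases ustep_proc_iff.mp h with ⟨-, v, rfl, -⟩ | ⟨-, v, rfl, -⟩ | ⟨-, rfl, -⟩ | ⟨-, rfl, -⟩
  exacts [.inl ⟨v, rfl⟩, .inl ⟨v, rfl⟩, .inr ⟨_, rfl⟩, .inr ⟨_, rfl⟩]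

end CtrlState

/-- A tick changes the temperature by `1 + γ` when the cooling is off and by
`-r + γ ∈ [-1.4, -0.4]` when it is on, and a read is within `ε = 0.1` of the temperature;
the bounds are the worst cases over `r ∈ [0.8, 1]` and `|γ| ≤ 0.4`. -/
def EngineInv : CtrlState → ℝ → ℝ → Prop
  | .sense, t, u => 0 ≤ t ∧ t ≤ 11.5 ∧ IsOff u
  | .idle, t, u => 0 ≤ t ∧ t ≤ 10.1 ∧ IsOff u
  | .switchOn, t, u => 9.9 < t ∧ t ≤ 11.5 ∧ IsOff u
  | .cooling, t, u => 9.9 < t ∧ t ≤ 11.5 ∧ IsOn u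
  | .countdown k, t, u => k ≤ 4 ∧ 9.9 - 1.4 * (5 - k) < t ∧ t ≤ 11.5 - 0.4 * (5 - k) ∧ IsOn u
  | .switchOff, t, u => 2.9 < t ∧ t ≤ 9.5 ∧ IsOn u

/-- An instantaneous move of an engine with devices named `a` at temperature `t`, taking the
actuator value from `u` to `u'`. -/
inductive EngStep (a : ℕ) (t : ℝ) : Proc → ℝ → Proc → ℝ → Prop
  | read {P P' : Proc} {u v : ℝ} : UStep P (.read a v) P' →
      v ∈ Icc (t - engEps) (t + engEps) → EngStep a t P u P' u
  | write {P P' : Proc} {u w : ℝ} : UStep P (.write a w) P' → EngStep a t P u P' w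

theorem engHeat_of_isOn {r u : ℝ} (hu : IsOn u) : engHeat r u = -r := if_pos hu

theorem engHeat_of_isOff {r u : ℝ} (hu : IsOff u) : engHeat r u = 1 := if_neg (not_lt.mpr hu)

namespace EngineInv

variable {ID : Val} {a : ℕ} {c : CtrlState} {t u : ℝ}

theorem temp_bounds (h : EngineInv c t u) : 0 ≤ t ∧ t ≤ 30 := by
  cases c with
  | countdown k =>
      obtain ⟨hk, h1, h2, -⟩ := h
      have hk' : (k : ℝ) ≤ 4 := by exact_mod_cast hk
      constructor <;> nlinarith [(Nat.cast_nonneg k : (0 : ℝ) ≤ k)]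
  | _ => obtain ⟨h1, h2, -⟩ := h; constructor <;> linarith

theorem engStep {P' : Proc} {u' : ℝ} (h : EngineInv c t u)
    (hs : EngStep a t (c.proc ID a) u P' u') : ∃ c', P' = c'.proc ID a ∧ EngineInv c' t u' := by
  rcases hs with ⟨hs, hv⟩ | ⟨hs⟩ <;> rcases CtrlState.ustep_proc_iff.mp hs with
    ⟨rfl, v', hl, rfl⟩ | ⟨rfl, v', hl, rfl⟩ | ⟨rfl, hl, rfl⟩ | ⟨rfl, hl, rfl⟩ <;> cases hl
  · obtain ⟨h0, h1, hu⟩ := h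
    simp only [engEps, mem_Icc] at hv
    split_ifs with hv'
    · exact ⟨.switchOn, rfl, by linarith, h1, hu⟩
    · exact ⟨.idle, rfl, h0, by linarith, hu⟩
  · obtain ⟨-, h0, h1, hu⟩ := h
    simp only [engEps, mem_Icc] at hv
    norm_num at h0 h1
    rw [if_neg (by linarith)]
    exact ⟨.switchOff, rfl, by linarith, by linarith, hu⟩
  · exact ⟨.cooling, rfl, h.1, h.2.1, by norm_num [IsOn, valOn]⟩
  · exact ⟨.idle, rfl, by linarith [h.1], by linarith [h.2.1], by norm_num [IsOff, valOff]⟩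

theorem exists_engStep (h : EngineInv c t u) (hc : ¬ c.IsQuiet) :
    ∃ c' u', c'.pending < c.pending ∧ EngineInv c' t u' ∧
      EngStep a t (c.proc ID a) u (c'.proc ID a) u' := by
  have ht : t ∈ Icc (t - engEps) (t + engEps) := by norm_num [engEps]
  cases c with
  | sense =>
      obtain ⟨h0, h1, hu⟩ := h
      by_cases h10 : 10 < t
      · refine ⟨.switchOn, u, by decide, ⟨h10.trans' (by norm_num), h1, hu⟩, .read ?_ ht⟩
        exact CtrlState.ustep_proc_iff.mpr (.inl ⟨rfl, t, rfl, (if_pos h10).symm⟩)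
      · refine ⟨.idle, u, by decide, ⟨h0, by linarith, hu⟩, .read ?_ ht⟩
        exact CtrlState.ustep_proc_iff.mpr (.inl ⟨rfl, t, rfl, (if_neg h10).symm⟩)
  | countdown k =>
      cases k with
      | succ k => exact absurd trivial hc
      | zero =>
          obtain ⟨-, h0, h1, hu⟩ := h
          norm_num at h0 h1
          refine ⟨.switchOff, u, by decide, ⟨by linarith, by linarith, hu⟩, .read ?_ ht⟩
          exact CtrlState.ustep_proc_iff.mpr
            (.inr (.inl ⟨rfl, t, rfl, (if_neg (by linarith)).symm⟩))
  | switchOn =>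
      refine ⟨.cooling, valOn, by decide, ⟨h.1, h.2.1, by norm_num [IsOn, valOn]⟩, .write ?_⟩
      exact CtrlState.ustep_proc_iff.mpr (.inr (.inr (.inl ⟨rfl, rfl, rfl⟩)))
  | switchOff =>
      refine ⟨.idle, valOff, by decide, ⟨by linarith [h.1], by linarith [h.2.1],
        by norm_num [IsOff, valOff]⟩, .write ?_⟩
      exact CtrlState.ustep_proc_iff.mpr (.inr (.inr (.inr ⟨rfl, rfl, rfl⟩)))
  | idle | cooling => exact absurd trivial hc

theorem afterTick {r γ : ℝ} (h : EngineInv c t u) (hc : c.IsQuiet) (hr : r ∈ Icc 0.8 1)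
    (hγ : γ ∈ Icc (-engDelta) engDelta) : EngineInv c.afterTick (t + engHeat r u + γ) u := by
  obtain ⟨hr1, hr2⟩ := hr
  obtain ⟨hγ1, hγ2⟩ := hγ
  norm_num [engDelta] at hγ1 hγ2
  match c, hc, h with
  | .idle, _, ⟨h0, h1, hu⟩ =>
      rw [engHeat_of_isOff hu]
      exact ⟨by linarith, by linarith, hu⟩
  | .cooling, _, ⟨h0, h1, hu⟩ =>
      rw [engHeat_of_isOn hu]
      exact ⟨le_rfl, by push_cast; linarith, by push_cast; linarith, hu⟩
  | .countdown (k + 1), _, ⟨hk, h0, h1, hu⟩ =>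
      rw [engHeat_of_isOn hu]
      push_cast at h0 h1
      exact ⟨by omega, by linarith, by linarith, hu⟩

end EngineInv

section Glue

variable {X1 X2 : Finset ℕ}

@[simp]
theorem restrL_glue (f : {n // n ∈ X1} → ℝ) (g : {n // n ∈ X2} → ℝ) : restrL (glue f g) = f := by
  funext x
  simp [restrL, glue, x.2]

theorem restrR_glue (h : Disjoint X1 X2) (f : {n // n ∈ X1} → ℝ) (g : {n // n ∈ X2} → ℝ) :
    restrR (glue f g) = g := by
  funext x
  simp [restrR, glue, Finset.disjoint_right.mp h x.2]

end Glue

namespace Env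

variable {E1 E2 : Env}

theorem invHolds_disjUnion (h : Disjoint E1.X E2.X) :
    invHolds (E1.disjUnion E2) ↔ invHolds E1 ∧ invHolds E2 := by
  simp [invHolds, disjUnion, restrR_glue h]

theorem updateAct_disjUnion (a : ℕ) (v : ℝ) :
    updateAct (E1.disjUnion E2) a v = (updateAct E1 a v).disjUnion (updateAct E2 a v) := by
  unfold updateAct disjUnion
  congr 1
  funext b
  by_cases hb : (b : ℕ) ∈ E1.A <;> by_cases hba : (b : ℕ) = a <;> simp [glue, hb, hba]

theorem readSensor_disjUnion (h : EnvDisj E1 E2) (h1 : (E1.meas E1.xi_x E1.xi_e).Nonempty)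
    (h2 : (E2.meas E2.xi_x E2.xi_e).Nonempty) (s : ℕ) :
    readSensor (E1.disjUnion E2) s = readSensor E1 s ∪ readSensor E2 s := by
  obtain ⟨hX, -, hS⟩ := h
  obtain ⟨m1, hm1⟩ := h1
  obtain ⟨m2, hm2⟩ := h2
  ext v
  simp only [readSensor, disjUnion, restrL_glue, restrR_glue hX, restrR_glue hS, mem_union,
    mem_ofPred_eq, Finset.mem_union]
  constructor
  · rintro ⟨hs, -, ⟨n1, hn1, n2, hn2, rfl⟩, rfl⟩
    by_cases hs1 : s ∈ E1.S
    · exact .inl ⟨hs1, n1, hn1, by simp [glue, hs1]⟩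
    · exact .inr ⟨hs.resolve_left hs1, n2, hn2, by simp [glue, hs1]⟩
  · rintro (⟨hs, n1, hn1, rfl⟩ | ⟨hs, n2, hn2, rfl⟩)
    · exact ⟨.inl hs, _, ⟨n1, hn1, m2, hm2, rfl⟩, by simp [glue, hs]⟩
    · exact ⟨.inr hs, _, ⟨m1, hm1, n2, hn2, rfl⟩, by
        simp [glue, Finset.disjoint_right.mp hS hs]⟩

theorem mem_nextEnv_disjUnion (hX : Disjoint E1.X E2.X) (hA : Disjoint E1.A E2.A) {E : Env} :
    E ∈ nextEnv (E1.disjUnion E2) ↔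
      ∃ E1' ∈ nextEnv E1, ∃ E2' ∈ nextEnv E2, E = E1'.disjUnion E2' := by
  simp only [nextEnv, disjUnion, restrL_glue, restrR_glue hX, restrR_glue hA, mem_ofPred_eq]
  constructor
  · rintro ⟨_, ⟨ξ1, hξ1, ξ2, hξ2, rfl⟩, rfl⟩
    exact ⟨_, ⟨ξ1, hξ1, rfl⟩, _, ⟨ξ2, hξ2, rfl⟩, rfl⟩
  · rintro ⟨_, ⟨ξ1, hξ1, rfl⟩, _, ⟨ξ2, hξ2, rfl⟩, rfl⟩
    exact ⟨_, ⟨ξ1, hξ1, ξ2, hξ2, rfl⟩, rfl⟩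

end Env

def engEnv (r : ℝ) (x : ℕ) (t u : ℝ) : Env :=
  { EngEnvN r x x x with xi_x := fun _ => t, xi_u := fun _ => u }

section EngEnv

variable {r t u : ℝ} {x : ℕ}

theorem invHolds_engEnv : invHolds (engEnv r x t u) ↔ 0 ≤ t ∧ t ≤ 30 := by
  simp [invHolds, engEnv, EngEnvN]

theorem meas_engEnv_nonempty :
    ((engEnv r x t u).meas (engEnv r x t u).xi_x (engEnv r x t u).xi_e).Nonempty :=
  ⟨fun _ => t, fun _ _ => by constructor <;> simp [engEnv, engEps] <;> norm_num⟩

theorem readSensor_engEnv (s : ℕ) :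
    readSensor (engEnv r x t u) s = {v | s = x ∧ v ∈ Icc (t - engEps) (t + engEps)} := by
  ext v
  simp only [readSensor, engEnv, EngEnvN, Finset.mem_singleton, mem_ofPred_eq]
  constructor
  · rintro ⟨rfl, m, hm, rfl⟩
    exact ⟨rfl, hm _ ⟨s, rfl⟩⟩
  · rintro ⟨rfl, hv⟩
    exact ⟨rfl, fun _ => v, fun _ _ => hv, rfl⟩

theorem updateAct_engEnv (a : ℕ) (v : ℝ) :
    updateAct (engEnv r x t u) a v = engEnv r x t (if a = x then v else u) := by
  unfold updateAct engEnv
  congr 1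
  funext b
  have hb : (b : ℕ) = x := Finset.mem_singleton.mp b.2
  by_cases ha : a = x <;> simp [hb, ha, Ne.symm]

theorem mem_nextEnv_engEnv {E : Env} : E ∈ nextEnv (engEnv r x t u) ↔
    ∃ γ ∈ Icc (-engDelta) engDelta, E = engEnv r x (t + engHeat r u + γ) u := by
  simp only [nextEnv, engEnv, EngEnvN, mem_ofPred_eq]
  constructor
  · rintro ⟨ξ, ⟨γ, hγ, hξ⟩, rfl⟩
    refine ⟨γ, hγ, ?_⟩
    congr 1
    funext y
    exact hξ y ⟨x, Finset.mem_singleton_self x⟩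
  · rintro ⟨γ, hγ, rfl⟩
    exact ⟨_, ⟨γ, hγ, fun _ _ => rfl⟩, rfl⟩

theorem envDisj_engEnv {r' t' u' : ℝ} {y : ℕ} (h : x ≠ y) :
    EnvDisj (engEnv r x t u) (engEnv r' y t' u') := by
  simp [EnvDisj, engEnv, EngEnvN, h]

end EngEnv

def airEnv (r : ℝ) (t u : Fin 2 → ℝ) : Env :=
  (engEnv r 0 (t 0) (u 0)).disjUnion (engEnv r 1 (t 1) (u 1))

section AirEnv

variable {r : ℝ} {t u : Fin 2 → ℝ}

theorem invHolds_airEnv : invHolds (airEnv r t u) ↔ ∀ i, 0 ≤ t i ∧ t i ≤ 30 := by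
  rw [airEnv, Env.invHolds_disjUnion (envDisj_engEnv zero_ne_one).1, invHolds_engEnv,
    invHolds_engEnv, Fin.forall_fin_two]

theorem readSensor_airEnv (i : Fin 2) :
    readSensor (airEnv r t u) i = Icc (t i - engEps) (t i + engEps) := by
  rw [airEnv, Env.readSensor_disjUnion (envDisj_engEnv zero_ne_one) meas_engEnv_nonempty
    meas_engEnv_nonempty, readSensor_engEnv, readSensor_engEnv]
  fin_cases i <;> ext v <;> simp

theorem updateAct_airEnv (i : Fin 2) (v : ℝ) :
    updateAct (airEnv r t u) i v = airEnv r t (update u i v) := by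
  rw [airEnv, Env.updateAct_disjUnion, updateAct_engEnv, updateAct_engEnv]
  fin_cases i <;> simp [airEnv]

theorem mem_nextEnv_airEnv {E : Env} : E ∈ nextEnv (airEnv r t u) ↔
    ∃ γ : Fin 2 → ℝ, (∀ i, γ i ∈ Icc (-engDelta) engDelta) ∧
      E = airEnv r (fun i => t i + engHeat r (u i) + γ i) u := by
  obtain ⟨hX, hA, -⟩ := envDisj_engEnv (r := r) (t := t 0) (t' := t 1) (u := u 0) (u' := u 1)
    zero_ne_one
  rw [airEnv, Env.mem_nextEnv_disjUnion hX hA]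
  simp only [mem_nextEnv_engEnv, Fin.forall_fin_two]
  constructor
  · rintro ⟨_, ⟨γ0, hγ0, rfl⟩, _, ⟨γ1, hγ1, rfl⟩, rfl⟩
    exact ⟨![γ0, γ1], ⟨hγ0, hγ1⟩, rfl⟩
  · rintro ⟨γ, ⟨hγ0, hγ1⟩, rfl⟩
    exact ⟨_, ⟨γ 0, hγ0, rfl⟩, _, ⟨γ 1, hγ1, rfl⟩, rfl⟩

end AirEnv

def airProc (p : Fin 2 → Proc) : Proc := .res (.par (.par (p 0) (p 1)) Check) warningCh

section AirProc

variable {p : Fin 2 → Proc} {l : Label} {R : Proc}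

theorem ustep_airProc {i : Fin 2} {P' : Proc} (h : UStep (p i) l P')
    (hl : ∀ v, l ≠ .inp warningCh v ∧ l ≠ .out warningCh v) (ht : l ≠ .tick) :
    UStep (airProc p) l (airProc (update p i P')) := by
  fin_cases i
  · simpa [airProc] using UStep.res (.parL (.parL (Q := p 1) h ht) ht) hl
  · simpa [airProc] using UStep.res (.parL (.parR (P := p 0) h ht) ht) hl

theorem ustep_airProc_inv (hp : ∀ i c v Q, ¬ UStep (p i) (.out c v) Q)
    (h : UStep (airProc p) l R) : ∃ i P', UStep (p i) l P' ∧ R = airProc (update p i P') := by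
  rcases h with _ | _ | _ | _ | _ | _ | _ | _ | ⟨h, hres⟩
  rcases h with _ | _ | _ | _ | ⟨h1, h2⟩ | ⟨h1, h2⟩ | ⟨h, -⟩ | ⟨h, -⟩
  · rcases h1 with _ | _ | _ | _ | _ | _ | ⟨h1, -⟩ | ⟨h1, -⟩
    exacts [(hp 0 _ _ _ h1).elim, (hp 1 _ _ _ h1).elim]
  · obtain ⟨v, hv⟩ := ustep_check h2
    cases hv
  · rcases h with _ | _ | _ | _ | ⟨h1, -⟩ | ⟨-, h1⟩ | ⟨h, -⟩ | ⟨h, -⟩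
    · exact (hp 0 _ _ _ h1).elim
    · exact (hp 1 _ _ _ h1).elim
    · exact ⟨0, _, h, by simp [airProc]⟩
    · exact ⟨1, _, h, by simp [airProc]⟩
  · obtain ⟨v, rfl⟩ := ustep_check h
    exact ((hres v).1 rfl).elim

theorem tstep_airProc {p' : Fin 2 → Proc} (h : ∀ i, TStep (p i) (p' i))
    (hq : ∀ i l Q, ¬ UStep (p i) l Q) : TStep (airProc p) (airProc p') := by
  have hpar : ∀ l R, ¬ UStep (.par (p 0) (p 1)) l R := fun _ _ => not_ustep_par (hq 0) (hq 1)
  refine .res (.timePar (.timePar (h 0) (h 1) (hpar .tau)) (tstep_check_iff.mpr rfl) ?_)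
  intro R hR
  rcases hR with _ | _ | _ | _ | ⟨h1, -⟩ | ⟨h1, -⟩ | ⟨h1, -⟩ | ⟨h1, -⟩
  iterate 3 exact hpar _ _ h1
  obtain ⟨v, hv⟩ := ustep_check h1
  cases hv

theorem tstep_airProc_inv (h : TStep (airProc p) R) :
    ∃ p' : Fin 2 → Proc, (∀ i, TStep (p i) (p' i)) ∧ R = airProc p' := by
  rcases h with _ | _ | _ | _ | _ | _ | _ | ⟨h⟩
  rcases h with _ | _ | _ | _ | _ | _ | ⟨h, hc, -⟩
  rcases h with _ | _ | _ | _ | _ | _ | ⟨h0, h1, -⟩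
  obtain rfl := tstep_check_iff.mp hc
  exact ⟨![_, _], Fin.forall_fin_two.mpr ⟨h0, h1⟩, rfl⟩

variable {r : ℝ} {t u : Fin 2 → ℝ}

theorem cstepU_of_engStep (hinv : invHolds (airEnv r t u)) {i : Fin 2} {P' : Proc} {u' : ℝ}
    (h : EngStep i (t i) (p i) (u i) P' u') :
    CStepU ⟨airEnv r t u, airProc p⟩ .tau
      ⟨airEnv r t (update u i u'), airProc (update p i P')⟩ := by
  rcases h with ⟨h, hv⟩ | ⟨h⟩
  · rw [update_eq_self]
    exact .sensRead (ustep_airProc h (fun _ => ⟨nofun, nofun⟩) nofun) hinv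
      ((readSensor_airEnv i).symm ▸ hv)
  · rw [← updateAct_airEnv]
    exact .actWrite (ustep_airProc h (fun _ => ⟨nofun, nofun⟩) nofun) hinv

theorem cstepU_airProc_inv
    (hp : ∀ i l Q, UStep (p i) l Q → (∃ v, l = .read i v) ∨ (∃ v, l = .write i v))
    {α : Label} {N : CPS} (h : CStepU ⟨airEnv r t u, airProc p⟩ α N) :
    α = .tau ∧ ∃ (i : Fin 2) (P' : Proc) (u' : ℝ), EngStep i (t i) (p i) (u i) P' u' ∧
      N = ⟨airEnv r t (update u i u'), airProc (update p i P')⟩ := by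
  have hout : ∀ i c v Q, ¬ UStep (p i) (.out c v) Q := fun i _ _ _ h => by
    rcases hp i _ _ h with ⟨_, hl⟩ | ⟨_, hl⟩ <;> cases hl
  rcases h with ⟨h, -⟩ | ⟨h, -⟩ | ⟨h, -, hv⟩ | ⟨h, -⟩ | ⟨h, -⟩ <;>
    obtain ⟨i, P', hi, rfl⟩ := ustep_airProc_inv hout h <;>
    rcases hp i _ _ hi with ⟨_, hl⟩ | ⟨_, hl⟩ <;> cases hl
  · rw [readSensor_airEnv] at hv
    exact ⟨rfl, i, P', u i, .read hi hv, by rw [update_eq_self]⟩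
  · exact ⟨rfl, i, P', _, .write hi, by rw [updateAct_airEnv]⟩

end AirProc

def engId : Fin 2 → Val := ![idL, idR]

def engines (c : Fin 2 → CtrlState) (i : Fin 2) : Proc := (c i).proc (engId i) i

def airCPS (r : ℝ) (c : Fin 2 → CtrlState) (t u : Fin 2 → ℝ) : CPS :=
  ⟨airEnv r t u, airProc (engines c)⟩

theorem airplaneGen_eq (r : ℝ) :
    AirplaneGen r = airCPS r (fun _ => .sense) (fun _ => 0) (fun _ => valOff) := rfl

theorem update_engines (c : Fin 2 → CtrlState) (i : Fin 2) (c' : CtrlState) :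
    update (engines c) i (c'.proc (engId i) i) = engines (update c i c') := by
  funext j
  by_cases h : j = i
  · subst h; simp [engines]
  · simp [engines, h]

section Engines

variable {r : ℝ} {c : Fin 2 → CtrlState} {t u : Fin 2 → ℝ}

theorem engineInv_update (hinv : ∀ j, EngineInv (c j) (t j) (u j)) {i : Fin 2} {c' : CtrlState}
    {u' : ℝ} (h : EngineInv c' (t i) u') :
    ∀ j, EngineInv (update c i c' j) (t j) (update u i u' j) := by
  intro j
  by_cases hj : j = i
  · subst hj; simpa using h
  · simpa [hj] using hinv j

theorem invHolds_of_engineInv (hinv : ∀ i, EngineInv (c i) (t i) (u i)) :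
    invHolds (airEnv r t u) :=
  invHolds_airEnv.mpr fun i => (hinv i).temp_bounds

theorem cstepU_airCPS_inv {α : Label} {N : CPS} (h : CStepU (airCPS r c t u) α N) :
    α = .tau ∧ ∃ (i : Fin 2) (P' : Proc) (u' : ℝ), EngStep i (t i) (engines c i) (u i) P' u' ∧
      N = ⟨airEnv r t (update u i u'), airProc (update (engines c) i P')⟩ :=
  cstepU_airProc_inv (fun _ _ _ => CtrlState.label_of_ustep_proc) h

theorem exists_tauStep_airCPS (hinv : ∀ j, EngineInv (c j) (t j) (u j)) {i : Fin 2}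
    (hi : ¬ (c i).IsQuiet) : ∃ ci ui, ci.pending < (c i).pending ∧ EngineInv ci (t i) ui ∧
      TauStep (airCPS r c t u) (airCPS r (update c i ci) t (update u i ui)) := by
  obtain ⟨ci, ui, hlt, hci, hs⟩ := (hinv i).exists_engStep (ID := engId i) (a := i) hi
  refine ⟨ci, ui, hlt, hci, ?_⟩
  have h := cstepU_of_engStep (r := r) (p := engines c) (invHolds_of_engineInv hinv) hs
  rwa [update_engines] at h

theorem exists_weakTau_quiet (c : Fin 2 → CtrlState) (u : Fin 2 → ℝ)
    (hinv : ∀ i, EngineInv (c i) (t i) (u i)) :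
    ∃ c' u', (∀ i, (c' i).IsQuiet) ∧ (∀ i, EngineInv (c' i) (t i) (u' i)) ∧
      WeakTau (airCPS r c t u) (airCPS r c' t u') := by
  by_cases hq : ∀ i, (c i).IsQuiet
  · exact ⟨c, u, hq, hinv, .refl⟩
  obtain ⟨i, hi⟩ := not_forall.mp hq
  obtain ⟨ci, ui, hlt, hci, hs⟩ := exists_tauStep_airCPS (r := r) hinv hi
  obtain ⟨c', u', hq', hinv', hw⟩ := exists_weakTau_quiet _ _ (engineInv_update hinv hci)
  exact ⟨c', u', hq', hinv', .head hs hw⟩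
termination_by (c 0).pending + (c 1).pending
decreasing_by fin_cases i <;> simpa using hlt

theorem quiet_of_cstep_tick (hinv : ∀ i, EngineInv (c i) (t i) (u i)) {N : CPS}
    (h : CStep (airCPS r c t u) .tick N) (i : Fin 2) : (c i).IsQuiet := by
  by_contra hi
  obtain ⟨_, _, -, -, hs⟩ := exists_tauStep_airCPS (r := r) hinv hi
  exact h.2.1 _ hs

theorem cstep_tick_airCPS_iff (hq : ∀ i, (c i).IsQuiet) {N : CPS} :
    CStep (airCPS r c t u) .tick N ↔ invHolds (airEnv r t u) ∧
      ∃ γ : Fin 2 → ℝ, (∀ i, γ i ∈ Icc (-engDelta) engDelta) ∧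
        N = airCPS r (fun i => (c i).afterTick) (fun i => t i + engHeat r (u i) + γ i) u := by
  have hquiet : ∀ i l Q, ¬ UStep (engines c i) l Q := fun i _ _ => (hq i).not_ustep
  constructor
  · rintro ⟨hT, -, hinv, hE⟩
    obtain ⟨p', hp', hP⟩ := tstep_airProc_inv hT
    obtain ⟨γ, hγ, hE⟩ := mem_nextEnv_airEnv.mp hE
    have hp' : p' = engines fun i => (c i).afterTick :=
      funext fun i => (hq i).tstep_iff.mp (hp' i)
    subst hp'
    exact ⟨hinv, γ, hγ, by cases N; simp_all [airCPS]⟩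
  · rintro ⟨hinv, γ, hγ, rfl⟩
    refine ⟨tstep_airProc (fun i => (hq i).tstep_iff.mpr rfl) hquiet, fun N' hs => ?_, hinv,
      mem_nextEnv_airEnv.mpr ⟨γ, hγ, rfl⟩⟩
    obtain ⟨-, i, _, _, ⟨hU, -⟩ | ⟨hU⟩, -⟩ := cstepU_airCPS_inv hs <;> exact hquiet i _ _ hU

end Engines

def AirInv (M : CPS) : Prop :=
  ∃ r ∈ Icc (0.8 : ℝ) 1, ∃ c t u, (∀ i, EngineInv (c i) (t i) (u i)) ∧ M = airCPS r c t u

namespace AirInv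

variable {M N : CPS}

theorem airplaneGen {r : ℝ} (hr : r ∈ Icc (0.8 : ℝ) 1) : AirInv (AirplaneGen r) :=
  ⟨r, hr, fun _ => .sense, fun _ => 0, fun _ => valOff,
    fun _ => ⟨le_rfl, by norm_num, by norm_num [IsOff, valOff]⟩, airplaneGen_eq r⟩

theorem cstepU {α : Label} (hM : AirInv M) (h : CStepU M α N) : α = .tau ∧ AirInv N := by
  obtain ⟨r, hr, c, t, u, hinv, rfl⟩ := hM
  obtain ⟨rfl, i, P', u', hs, rfl⟩ := cstepU_airCPS_inv h
  obtain ⟨c', rfl, hc'⟩ := (hinv i).engStep hs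
  exact ⟨rfl, r, hr, _, t, _, engineInv_update hinv hc', by rw [airCPS, update_engines]⟩

theorem tick (hM : AirInv M) (h : CStep M .tick N) : AirInv N := by
  obtain ⟨r, hr, c, t, u, hinv, rfl⟩ := hM
  have hq := quiet_of_cstep_tick hinv h
  obtain ⟨-, γ, hγ, rfl⟩ := (cstep_tick_airCPS_iff hq).mp h
  exact ⟨r, hr, _, _, u, fun i => (hinv i).afterTick (hq i) hr (hγ i), rfl⟩

theorem step {α : Label} (hM : AirInv M) (h : CStep M α N) :
    (α = .tau ∨ α = .tick) ∧ AirInv N := by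
  cases α with
  | tick => exact ⟨.inr rfl, hM.tick h⟩
  | _ => exact (hM.cstepU h).imp_left .inl

theorem exists_weakStep_tick (hM : AirInv M) : ∃ N, WeakStep M .tick N ∧ AirInv N := by
  obtain ⟨r, hr, c, t, u, hinv, rfl⟩ := hM
  obtain ⟨c', u', hq, hinv', hw⟩ := exists_weakTau_quiet (r := r) c u hinv
  have hγ : (0 : ℝ) ∈ Icc (-engDelta) engDelta := by norm_num [engDelta]
  have htick := (cstep_tick_airCPS_iff (r := r) hq).mpr
    ⟨invHolds_of_engineInv hinv', 0, fun _ => hγ, rfl⟩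
  exact ⟨_, ⟨_, _, hw, htick, .refl⟩, r, hr, _, _, u',
    fun i => (hinv' i).afterTick (hq i) hr hγ, rfl⟩

end AirInv

end

/-- **Bisimilarity of airplanes** (Proposition 5):
`Airplane ≈ Airplanē`, where the latter is equipped with the variant engines
of cooling power 0.8. -/
theorem airplane_bisim : Bisim Airplane AirplaneBar :=
  bisim_of_invariant AirInv AirInv.step AirInv.exists_weakStep_tick
    (AirInv.airplaneGen (by norm_num)) (AirInv.airplaneGen (by norm_num))

end CCPS
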